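/- arXiv:2512.19881 — 6 statements merged into one kernel-verified Lean document; each statement's English description precedes it below -/
import Mathlib

section
/- Let X be a compact Alexandroff space with at least two elements, and for x ∈ X let V(x) denote the smallest open neighbourhood of x. For x₁,…,x_n ∈ X let G(x₁,…,x_n) = V(x₁) × ⋯ × V(x_n) × X × X × ⋯ ⊆ X^ℕ, and for N ∈ ℕ let Γ_N = ⋃ { G(x₁,…,x_N) × G(x₁,…,x_N) : x₁,…,x_N ∈ X }. Then for a subset U ⊆ X^ℕ × X^ℕ, there exists N ∈ ℕ with Γ_N ⊆ U if and only if the diagonal Δ_{X^ℕ} = {(z,z) : z ∈ X^ℕ} is contained in the interior of U (where X^ℕ carries the product topology). -/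
open Filter Topology Set

/-- In a compact Alexandroff space `X` with at least two elements, for
`U ⊆ X^ℕ × X^ℕ` there exists `N` with `Γ_N ⊆ U` iff the diagonal is contained in the
interior of `U`. -/
theorem stmt_0 {X : Type*} [TopologicalSpace X] [CompactSpace X] [Nontrivial X]
    (hAlex : ∀ S : Set (Set X), (∀ s ∈ S, IsOpen s) → IsOpen (⋂₀ S))
    (V : X → Set X)
    (hV : ∀ x : X, IsOpen (V x) ∧ x ∈ V x ∧ ∀ U : Set X, IsOpen U → x ∈ U → V x ⊆ U)
    (U : Set ((ℕ → X) × (ℕ → X))) :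
    (∃ N : ℕ, (⋃ x : Fin N → X,
        ({y : ℕ → X | ∀ i : Fin N, y i ∈ V (x i)} ×ˢ
         {y : ℕ → X | ∀ i : Fin N, y i ∈ V (x i)})) ⊆ U) ↔
      {p : (ℕ → X) × (ℕ → X) | p.1 = p.2} ⊆ interior U := by
  constructor
  · rintro ⟨N, hN⟩ ⟨z, z'⟩ hp
    simp only [mem_setOf_eq] at hp
    subst hp
    have hopen : IsOpen {y : ℕ → X | ∀ i : Fin N, y i ∈ V (z i)} := by
      have : {y : ℕ → X | ∀ i : Fin N, y i ∈ V (z i)} =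
          ⋂ i : Fin N, (fun y : ℕ → X => y (i : ℕ)) ⁻¹' V (z i) := by
        ext y; simp
      rw [this]
      exact isOpen_iInter_of_finite fun i =>
        (hV (z i)).1.preimage (continuous_apply (i : ℕ))
    apply mem_interior_iff_mem_nhds.2
    apply Filter.mem_of_superset
      ((hopen.prod hopen).mem_nhds ⟨fun i => (hV (z i)).2.1, fun i => (hV (z i)).2.1⟩)
    intro p hp
    exact hN (mem_iUnion.2 ⟨fun i : Fin N => z i, hp⟩)
  · intro hdiag
    have key : ∀ z : ℕ → X, ∃ I : Finset ℕ,
        ({y : ℕ → X | ∀ i ∈ I, y i ∈ V (z i)} ×ˢ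
         {y : ℕ → X | ∀ i ∈ I, y i ∈ V (z i)}) ⊆ U := by
      intro z
      have hz : (z, z) ∈ interior U := hdiag rfl
      obtain ⟨u, v, hu, hv, hzu, hzv, huv⟩ :=
        isOpen_prod_iff.1 isOpen_interior z z hz
      obtain ⟨I, w, hw, hpi⟩ := isOpen_pi_iff.1 (hu.inter hv) z ⟨hzu, hzv⟩
      refine ⟨I, ?_⟩
      have hsub : {y : ℕ → X | ∀ i ∈ I, y i ∈ V (z i)} ⊆ u ∩ v := by
        intro y hy
        apply hpi
        intro i hi
        exact (hV (z i)).2.2 (w i) (hw i hi).1 (hw i hi).2 (hy i hi)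
      rintro ⟨y, y'⟩ ⟨hy, hy'⟩
      exact interior_subset (huv ⟨(hsub hy).1, (hsub hy').2⟩)
    choose I hI using key
    have hcover : (univ : Set (ℕ → X)) ⊆
        ⋃ z : ℕ → X, {y : ℕ → X | ∀ i ∈ I z, y i ∈ V (z i)} := by
      intro z _
      exact mem_iUnion.2 ⟨z, fun i _ => (hV (z i)).2.1⟩
    have hGopen : ∀ z : ℕ → X, IsOpen {y : ℕ → X | ∀ i ∈ I z, y i ∈ V (z i)} := by
      intro z
      have : {y : ℕ → X | ∀ i ∈ I z, y i ∈ V (z i)} =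
          ⋂ i ∈ (I z : Set ℕ), (fun y : ℕ → X => y i) ⁻¹' V (z i) := by
        ext y; simp
      rw [this]
      exact ((I z).finite_toSet).isOpen_biInter fun i _ =>
        (hV (z i)).1.preimage (continuous_apply i)
    obtain ⟨t, ht⟩ := isCompact_univ.elim_finite_subcover _ hGopen hcover
    set N : ℕ := (t.sup fun z => (I z).sup id) + 1 with hNdef
    refine ⟨N, ?_⟩
    rintro ⟨y, y'⟩ hmem
    obtain ⟨x, hy, hy'⟩ := mem_iUnion.1 hmem
    set xh : ℕ → X := fun i => if h : i < N then x ⟨i, h⟩ else y i with hxh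
    obtain ⟨z, hzt, hzmem⟩ : ∃ z ∈ t, xh ∈ {y : ℕ → X | ∀ i ∈ I z, y i ∈ V (z i)} := by
      have := ht (mem_univ xh)
      simpa using this
    have hlt : ∀ i ∈ I z, i < N := by
      intro i hi
      have h1 : i ≤ (I z).sup id := Finset.le_sup (f := id) hi
      have h2 : (I z).sup id ≤ t.sup fun z => (I z).sup id :=
        Finset.le_sup (f := fun z => (I z).sup id) hzt
      omega
    have hVsub : ∀ i (hi : i ∈ I z), V (x ⟨i, hlt i hi⟩) ⊆ V (z i) := by
      intro i hi
      have hx : xh i ∈ V (z i) := hzmem i hi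
      rw [hxh] at hx
      simp only [hlt i hi, dif_pos] at hx
      exact (hV _).2.2 _ (hV (z i)).1 hx
    apply hI z
    constructor
    · intro i hi
      exact hVsub i hi (hy ⟨i, hlt i hi⟩)
    · intro i hi
      exact hVsub i hi (hy' ⟨i, hlt i hi⟩)
end

section
/- Let X be a nonempty compact topological space. The following statements are equivalent: (a) ⋂ { closure{x} : x ∈ X } ≠ ∅; (b) for all x, y ∈ X one has closure{x} ∩ closure{y} ≠ ∅; (c) there exists z ∈ X such that X is the unique open neighbourhood of z. -/
open Filter Topology Set

/-- For a nonempty compact space `X`, the following are equivalent: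
(a) `⋂ {closure {x} : x ∈ X} ≠ ∅`; (b) `closure {x} ∩ closure {y} ≠ ∅` for all `x, y`;
(c) there exists `z` such that `X` is the unique open neighbourhood of `z`. -/
theorem stmt_3 {X : Type*} [TopologicalSpace X] [CompactSpace X] [Nonempty X] :
    List.TFAE
      [(⋂ x : X, closure {x}) ≠ ∅,
       ∀ x y : X, closure {x} ∩ closure {y} ≠ ∅,
       ∃ z : X, ∀ U : Set X, IsOpen U → z ∈ U → U = Set.univ] := by
  tfae_have 1 → 3 := by
    intro h
    obtain ⟨z, hz⟩ := nonempty_iff_ne_empty.mpr h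
    refine ⟨z, fun U hU hzU => ?_⟩
    ext x
    simp only [mem_univ, iff_true]
    have hzx : z ∈ closure ({x} : Set X) := mem_iInter.mp hz x
    rcases mem_closure_iff.mp hzx U hU hzU with ⟨w, hwU, hwx⟩
    rwa [mem_singleton_iff.mp hwx] at hwU
  tfae_have 3 → 2 := by
    rintro ⟨z, hz⟩ x y
    rw [← nonempty_iff_ne_empty]
    refine ⟨z, ?_, ?_⟩ <;>
    · rw [mem_closure_iff]
      intro U hU hzU
      rw [hz U hU hzU]
      exact ⟨_, mem_univ _, rfl⟩
  tfae_have 2 → 1 := by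
    intro h
    rw [← nonempty_iff_ne_empty]
    apply IsCompact.nonempty_iInter_of_directed_nonempty_isCompact_isClosed
    · intro x y
      obtain ⟨z, hzx, hzy⟩ := nonempty_iff_ne_empty.mpr (h x y)
      exact ⟨z, closure_minimal (singleton_subset_iff.mpr hzx) isClosed_closure,
        closure_minimal (singleton_subset_iff.mpr hzy) isClosed_closure⟩
    · exact fun x => ⟨x, subset_closure rfl⟩
    · exact fun x => isClosed_closure.isCompact
    · exact fun x => isClosed_closure
  tfae_finish
end

section
/- Let X be a topological space such that for all x, y ∈ X one has closure{x} ∩ closure{y} ≠ ∅. Then for every n ∈ ℕ and every finite family of points y₁, …, y_n ∈ X, the intersection closure{y₁} ∩ ⋯ ∩ closure{y_n} is nonempty. -/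
open Filter Topology Set

/-- If in a topological space `X` any two singleton closures intersect,
then any finite (nonempty) family of singleton closures has nonempty intersection. -/
theorem stmt_4 {X : Type*} [TopologicalSpace X]
    (h : ∀ x y : X, (closure {x} ∩ closure {y}).Nonempty)
    (n : ℕ) (hn : 1 ≤ n) (y : Fin n → X) :
    (⋂ i : Fin n, closure {y i}).Nonempty := by
  induction n with
  | zero => omega
  | succ m ih =>
    rcases Nat.eq_zero_or_pos m with hm | hm
    · subst hm
      exact ⟨y 0, by simp [Fin.forall_fin_one, subset_closure (mem_singleton _)]⟩
    · obtain ⟨w, hw⟩ := ih hm (fun i => y i.castSucc)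
      simp only [mem_iInter] at hw
      obtain ⟨z, hz1, hz2⟩ := h w (y (Fin.last m))
      refine ⟨z, ?_⟩
      simp only [mem_iInter]
      intro i
      induction i using Fin.lastCases with
      | last => exact hz2
      | cast i =>
        exact closure_minimal (singleton_subset_iff.2 (hw i)) isClosed_closure hz1
end

section
/- Let X be a compact topological space and suppose there exist a, b ∈ X with closure{a} ∩ closure{b} = ∅. Then the one-sided shift σ : X^ℕ → X^ℕ, (x_n)_{n∈ℕ} ↦ (x_{n+1})_{n∈ℕ}, on X^ℕ with the product topology is Li–Yorke chaotic, i.e., X^ℕ contains an uncountable set A such that every two distinct points of A form a scrambled pair for σ. -/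
open Filter Topology Set

/-- The one-sided shift on `ℕ → X`. -/
def shift {X : Type*} : (ℕ → X) → (ℕ → X) := fun x n => x (n + 1)

/-- `(x, y)` is a scrambled pair for `f`. -/
def ScrambledPair {Y : Type*} [TopologicalSpace Y] (f : Y → Y) (x y : Y) : Prop :=
  (∀ U : Set (Y × Y), IsOpen U → (∀ z : Y, (z, z) ∈ U) →
      ∃ n : ℕ, (f^[n] x, f^[n] y) ∈ U) ∧
  (∃ U : Set (Y × Y), IsOpen U ∧ (∀ z : Y, (z, z) ∈ U) ∧
      {n : ℕ | (f^[n] x, f^[n] y) ∉ U}.Infinite)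

/-- `f` is Li–Yorke chaotic. -/
def LiYorkeChaotic {Y : Type*} [TopologicalSpace Y] (f : Y → Y) : Prop :=
  ∃ A : Set Y, ¬ A.Countable ∧ ∀ x ∈ A, ∀ y ∈ A, x ≠ y → ScrambledPair f x y

/-! ### Auxiliary machinery -/

lemma shift_iterate {X : Type*} (x : ℕ → X) (n : ℕ) :
    shift^[n] x = fun i => x (i + n) := by
  induction n generalizing x with
  | zero => simp
  | succ n ih =>
    rw [Function.iterate_succ_apply, ih]
    funext i
    show x (i + n + 1) = x (i + (n + 1))
    rw [Nat.add_assoc]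

/-- decode `n` into (block index, offset); block `m` has length `m+1`. -/
def decodeBlk : ℕ → ℕ × ℕ
  | 0 => (0, 0)
  | n + 1 =>
    let p := decodeBlk n
    if p.2 = p.1 then (p.1 + 1, 0) else (p.1, p.2 + 1)

/-- start of block `m` -/
def tstart : ℕ → ℕ
  | 0 => 0
  | m + 1 => tstart m + m + 1

lemma decodeBlk_tstart_add : ∀ m, ∀ j ≤ m, decodeBlk (tstart m + j) = (m, j) := by
  intro m
  induction m with
  | zero =>
    intro j hj
    interval_cases j
    rfl
  | succ m ih =>
    have h0 : decodeBlk (tstart (m + 1)) = (m + 1, 0) := by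
      have hm := ih m le_rfl
      show decodeBlk (tstart m + m + 1) = _
      rw [decodeBlk, hm]
      simp
    intro j
    induction j with
    | zero => simpa using h0
    | succ j ihj =>
      intro hj
      have hj' : j < m + 1 := hj
      have hd := ihj (Nat.le_of_succ_le hj)
      have : tstart (m + 1) + (j + 1) = (tstart (m + 1) + j) + 1 := by omega
      rw [this, decodeBlk, hd]
      simp [Nat.ne_of_lt hj']

lemma tstart_add_self_strictMono : StrictMono (fun m => tstart m + m) := by
  have h : ∀ m, tstart m + m < tstart (m + 1) + (m + 1) := by
    intro m
    show _ < tstart m + m + 1 + (m + 1)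
    omega
  exact strictMono_nat_of_lt_succ h

/-- the bit pattern of the point associated to `t : ℕ → Bool` -/
def pat (t : ℕ → Bool) : ℕ → Bool := fun n =>
  decide ((decodeBlk n).2 = (decodeBlk n).1) && t (decodeBlk n).1.unpair.1

lemma pat_run (t : ℕ → Bool) (m j : ℕ) (hj : j < m) : pat t (tstart m + j) = false := by
  unfold pat
  rw [decodeBlk_tstart_add m j hj.le]
  simp [Nat.ne_of_lt hj]

lemma pat_bit (t : ℕ → Bool) (m : ℕ) : pat t (tstart m + m) = t m.unpair.1 := by
  unfold pat
  rw [decodeBlk_tstart_add m m le_rfl]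
  simp

/-- the embedding of a bit sequence using values `a`, `b` -/
def ebit {X : Type*} (a b : X) (u : ℕ → Bool) : ℕ → X := fun n => bif u n then b else a

lemma ebit_continuous {X : Type*} [TopologicalSpace X] (a b : X) :
    Continuous (ebit a b) := by
  refine continuous_pi fun n => ?_
  exact (continuous_of_discreteTopology (f := fun c : Bool => bif c then b else a)).comp
    (continuous_apply n)

lemma shift_iterate_ebit {X : Type*} (a b : X) (u : ℕ → Bool) (n : ℕ) :
    shift^[n] (ebit a b u) = ebit a b (fun i => u (i + n)) := by
  rw [shift_iterate]
  rfl

open Cardinal in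
lemma not_countable_nat_bool : ¬ Countable (ℕ → Bool) := by
  intro h
  have h1 : #(ℕ → Bool) ≤ ℵ₀ := Cardinal.mk_le_aleph0
  have h2 : #(ℕ → Bool) = 2 ^ ℵ₀ := by
    rw [← Cardinal.power_def, Cardinal.mk_bool, Cardinal.mk_nat]
  exact absurd (h2 ▸ h1) (Cardinal.cantor ℵ₀).not_ge

/-- key compactness fact: for an open set `U` containing the diagonal, there is `k`
such that `{a,b}`-valued sequences agreeing on the first `k` coordinates give pairs in `U`. -/
lemma key_compact {X : Type*} [TopologicalSpace X] (a b : X)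
    (U : Set ((ℕ → X) × (ℕ → X))) (hU : IsOpen U) (hd : ∀ z, (z, z) ∈ U) :
    ∃ k, ∀ u v : ℕ → Bool, (∀ i < k, u i = v i) → (ebit a b u, ebit a b v) ∈ U := by
  by_contra h
  push_neg at h
  choose u v huv hnotU using h
  set V : ℕ → Set ((ℕ → Bool) × (ℕ → Bool)) :=
    fun k => {p | (∀ i < k, p.1 i = p.2 i) ∧ (ebit a b p.1, ebit a b p.2) ∉ U} with hV
  have hmono : ∀ k, V (k + 1) ⊆ V k := by
    intro k p hp
    exact ⟨fun i hi => hp.1 i (hi.trans (Nat.lt_succ_self k)), hp.2⟩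
  have hne : ∀ k, (V k).Nonempty := fun k => ⟨(u k, v k), huv k, hnotU k⟩
  have hcont : Continuous (fun p : (ℕ → Bool) × (ℕ → Bool) => (ebit a b p.1, ebit a b p.2)) :=
    ((ebit_continuous a b).comp continuous_fst).prodMk ((ebit_continuous a b).comp continuous_snd)
  have hclosed : ∀ k, IsClosed (V k) := by
    intro k
    have h1 : IsClosed {p : (ℕ → Bool) × (ℕ → Bool) | ∀ i < k, p.1 i = p.2 i} := by
      have : {p : (ℕ → Bool) × (ℕ → Bool) | ∀ i < k, p.1 i = p.2 i} =
          ⋂ i ∈ Finset.range k, {p | p.1 i = p.2 i} := by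
        ext p; simp [Finset.mem_range]
      rw [this]
      refine isClosed_biInter fun i _ => ?_
      exact isClosed_eq ((continuous_apply i).comp continuous_fst)
        ((continuous_apply i).comp continuous_snd)
    have h2 : IsClosed {p : (ℕ → Bool) × (ℕ → Bool) | (ebit a b p.1, ebit a b p.2) ∉ U} :=
      IsClosed.preimage hcont hU.isClosed_compl
    exact h1.inter h2
  have hcompact : IsCompact (V 0) := (hclosed 0).isCompact
  obtain ⟨p, hp⟩ :=
    IsCompact.nonempty_iInter_of_sequence_nonempty_isCompact_isClosed V hmono hne hcompact hclosed
  have heq : p.1 = p.2 := by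
    funext i
    exact ((Set.mem_iInter.1 hp (i + 1)).1) i (Nat.lt_succ_self i)
  have := (Set.mem_iInter.1 hp 0).2
  rw [heq] at this
  exact this (hd (ebit a b p.2))

/-- If a compact space `X` has points `a, b` with
`closure {a} ∩ closure {b} = ∅`, then the one-sided shift on `X^ℕ` is Li–Yorke chaotic. -/
theorem stmt_7 {X : Type*} [TopologicalSpace X] [CompactSpace X]
    (a b : X) (hab : closure {a} ∩ closure {b} = ∅) :
    LiYorkeChaotic (shift : (ℕ → X) → (ℕ → X)) := by
  have hamem : a ∈ closure ({a} : Set X) := subset_closure rfl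
  have hbmem : b ∈ closure ({b} : Set X) := subset_closure rfl
  have hanb : a ∉ closure ({b} : Set X) := fun h =>
    absurd (Set.mem_inter hamem h) (by rw [hab]; exact notMem_empty a)
  have hbna : b ∉ closure ({a} : Set X) := fun h =>
    absurd (Set.mem_inter h hbmem) (by rw [hab]; exact notMem_empty b)
  have hne : a ≠ b := by
    rintro rfl
    exact hanb hamem
  -- the scrambled set
  set F : (ℕ → Bool) → (ℕ → X) := fun t => ebit a b (pat t) with hF
  have hFinj : Function.Injective F := by
    intro t s hts
    funext k
    by_contra hk
    have h1 : pat t (tstart (Nat.pair k 0) + Nat.pair k 0) = t k := by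
      rw [pat_bit]; simp
    have h2 : pat s (tstart (Nat.pair k 0) + Nat.pair k 0) = s k := by
      rw [pat_bit]; simp
    have := congrFun hts (tstart (Nat.pair k 0) + Nat.pair k 0)
    simp only [hF, ebit, h1, h2] at this
    cases htk : t k <;> cases hsk : s k <;> simp_all
  refine ⟨Set.range F, ?_, ?_⟩
  · intro hc
    have huniv : (Set.univ : Set (ℕ → Bool)).Countable := by
      simpa using hc.preimage hFinj
    exact not_countable_nat_bool (Set.countable_univ_iff.mp huniv)
  · rintro x ⟨t, rfl⟩ y ⟨s, rfl⟩ hxy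
    have hts : t ≠ s := fun h => hxy (by rw [h])
    obtain ⟨k0, hk0⟩ : ∃ k, t k ≠ s k := by
      by_contra h; push_neg at h; exact hts (funext h)
    constructor
    · -- proximality
      intro U hU hdiag
      obtain ⟨k, hk⟩ := key_compact a b U hU hdiag
      refine ⟨tstart k, ?_⟩
      rw [hF]
      simp only
      rw [shift_iterate_ebit, shift_iterate_ebit]
      refine hk _ _ fun i hi => ?_
      have h1 : pat t (i + tstart k) = false := by
        rw [Nat.add_comm]; exact pat_run t k i hi
      have h2 : pat s (i + tstart k) = false := by
        rw [Nat.add_comm]; exact pat_run s k i hi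
      rw [h1, h2]
    · -- separation infinitely often
      set W : Set (X × X) :=
        ((closure {a})ᶜ ×ˢ (closure {a})ᶜ) ∪ ((closure {b})ᶜ ×ˢ (closure {b})ᶜ) with hW
      set U : Set ((ℕ → X) × (ℕ → X)) :=
        (fun p : (ℕ → X) × (ℕ → X) => (p.1 0, p.2 0)) ⁻¹' W with hU
      have hWopen : IsOpen W :=
        ((isClosed_closure.isOpen_compl).prod isClosed_closure.isOpen_compl).union
          ((isClosed_closure.isOpen_compl).prod isClosed_closure.isOpen_compl)
      have hUopen : IsOpen U :=
        hWopen.preimage (((continuous_apply 0).comp continuous_fst).prodMk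
          ((continuous_apply 0).comp continuous_snd))
      have hUdiag : ∀ z : ℕ → X, (z, z) ∈ U := by
        intro z
        have : z 0 ∉ closure ({a} : Set X) ∨ z 0 ∉ closure ({b} : Set X) := by
          by_contra h
          push_neg at h
          exact absurd (Set.mem_inter h.1 h.2) (by rw [hab]; exact notMem_empty _)
        rcases this with h | h
        · exact Or.inl ⟨h, h⟩
        · exact Or.inr ⟨h, h⟩
      have habW : (a, b) ∉ W := by
        rintro (⟨h1, _⟩ | ⟨_, h2⟩)
        · exact h1 hamem
        · exact h2 hbmem
      have hbaW : (b, a) ∉ W := by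
        rintro (⟨_, h2⟩ | ⟨h1, _⟩)
        · exact h2 hamem
        · exact h1 hbmem
      refine ⟨U, hUopen, hUdiag, ?_⟩
      have hinj : Function.Injective
          (fun j : ℕ => tstart (Nat.pair k0 j) + Nat.pair k0 j) := by
        intro i j hij
        have h2 := tstart_add_self_strictMono.injective hij
        have h3 := congrArg (fun x => x.unpair.2) h2
        simpa [Nat.unpair_pair] using h3
      refine Set.infinite_of_injective_forall_mem hinj fun j => ?_
      set m := Nat.pair k0 j with hm
      set n := tstart m + m with hn
      show (shift^[n] (F t), shift^[n] (F s)) ∉ U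
      rw [hF]
      simp only
      rw [shift_iterate_ebit, shift_iterate_ebit]
      intro hmem
      have hfirst : (0 : ℕ) + n = n := Nat.zero_add n
      have h1 : pat t n = t k0 := by rw [hn, pat_bit, hm, Nat.unpair_pair]
      have h2 : pat s n = s k0 := by rw [hn, pat_bit, hm, Nat.unpair_pair]
      have hmem' : ((ebit a b fun i => pat t (i + n)) 0, (ebit a b fun i => pat s (i + n)) 0) ∈ W :=
        hmem
      simp only [ebit, Nat.zero_add, h1, h2] at hmem'
      cases htk : t k0 <;> cases hsk : s k0 <;> rw [htk, hsk] at hmem' <;> simp at hmem' <;>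
        first
          | exact hk0 (htk.trans hsk.symm)
          | exact habW hmem'
          | exact hbaW hmem'
end

section
/- Let X be a compact Alexandroff space with at least two elements, endow X^ℕ with the product topology, and let σ : X^ℕ → X^ℕ be the one-sided shift (x_n)_{n∈ℕ} ↦ (x_{n+1})_{n∈ℕ}. Then the following statements are equivalent: (a) σ is Li–Yorke chaotic; (b) σ has at least one scrambled pair of distinct points; (c) σ has at least one non-asymptotic pair of distinct points; (d) there exist a, b ∈ X with closure{a} ∩ closure{b} = ∅; (e) ⋂ { closure{x} : x ∈ X } = ∅; (f) for every z ∈ X the smallest open neighbourhood V(z) of z is a proper subset of X. -/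
/-!
If some point `z` lies in the closure of every point, i.e. every point specializes to `z`, then
every point of `X^ℕ` specializes to the constant sequence at `z`, so the only open neighbourhood
of the diagonal of `X^ℕ` is the whole square and every pair is asymptotic. In the smallest open
neighbourhood language this is exactly `V z = X`.

Otherwise, take a minimal nonempty closed set `M` of the compact space `X` and `a ∈ M`. Some
`closure {b}` misses `a`, hence misses `M` by minimality, so `closure {a}` and `closure {b}` are
disjoint. For `s : ℕ → Bool` let `x_s` be `a` everywhere except at the positions `2 ^ k`, where
it is `a` or `b` according to the bit `s (unpair k).1`. Two of these sequences agree with the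
constant sequence `a` on longer and longer windows after shifting, so they are proximal, and if
`s m ≠ t m` they sit in the disjoint closed sets `closure {a}`, `closure {b}` (in some order) at
the infinitely many positions `2 ^ pair m j`. This gives an uncountable scrambled set.
-/

open Filter Topology Set

/-- `(x, y)` is an asymptotic pair for `f`. -/
def AsymptoticPair {Y : Type*} [TopologicalSpace Y] (f : Y → Y) (x y : Y) : Prop :=
  ∀ U : Set (Y × Y), IsOpen U → (∀ z : Y, (z, z) ∈ U) →
    {n : ℕ | (f^[n] x, f^[n] y) ∉ U}.Finite

section Dynamics

variable {Y : Type*} [TopologicalSpace Y] {f : Y → Y} {x y : Y}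

theorem ScrambledPair.ne (h : ScrambledPair f x y) : x ≠ y := by
  rintro rfl
  obtain ⟨U, -, hdiag, hinf⟩ := h.2
  exact hinf (by simp [hdiag])

theorem ScrambledPair.not_asymptoticPair (h : ScrambledPair f x y) : ¬ AsymptoticPair f x y := by
  obtain ⟨U, hU, hdiag, hinf⟩ := h.2
  exact fun hasym => hinf (hasym U hU hdiag)

theorem LiYorkeChaotic.exists_scrambledPair (h : LiYorkeChaotic f) :
    ∃ x y, x ≠ y ∧ ScrambledPair f x y := by
  obtain ⟨A, hA, hscr⟩ := h
  obtain ⟨x, hx, y, hy, hxy⟩ := not_subsingleton_iff.1 fun hs => hA hs.countable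
  exact ⟨x, y, hxy, hscr x hx y hy hxy⟩

theorem liYorkeChaotic_of_pairwise {ι : Type*} [Uncountable ι] (g : ι → Y)
    (hg : ∀ i j, i ≠ j → ScrambledPair f (g i) (g j)) : LiYorkeChaotic f := by
  have hinj : g.Injective := fun i j hij => by_contra fun hne => (hg i j hne).ne hij
  refine ⟨range g, fun hc => ?_, ?_⟩
  · have := hc.to_subtype
    exact not_countable (Equiv.ofInjective g hinj).injective.countable
  · rintro _ ⟨i, rfl⟩ _ ⟨j, rfl⟩ hij
    exact hg i j (ne_of_apply_ne g hij)

theorem scrambledPair_of_tendsto_of_infinite {c : Y} {n : ℕ → ℕ}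
    (hc : Tendsto (fun k => (f^[n k] x, f^[n k] y)) atTop (𝓝 (c, c)))
    {A B : Set Y} (hA : IsClosed A) (hB : IsClosed B) (hAB : Disjoint A B)
    (hinf : {k | f^[k] x ∈ A ∧ f^[k] y ∈ B}.Infinite) : ScrambledPair f x y := by
  refine ⟨fun U hU hdiag => ?_, (A ×ˢ B)ᶜ, (hA.prod hB).isOpen_compl,
    fun z hz => disjoint_left.1 hAB hz.1 hz.2, ?_⟩
  · obtain ⟨k, hk⟩ := (hc.eventually (hU.mem_nhds (hdiag c))).exists
    exact ⟨n k, hk⟩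
  · simpa only [mem_compl_iff, not_not, mem_prod] using hinf

theorem asymptoticPair_of_forall_specializes {c : Y} (hc : ∀ y, y ⤳ c) :
    AsymptoticPair f x y := by
  intro U hU hdiag
  have hU_univ : U = univ :=
    eq_univ_of_forall fun p => ((hc p.1).prod (hc p.2)).mem_open hU (hdiag c)
  simp [hU_univ]

end Dynamics

section Specialization

variable {X : Type*} [TopologicalSpace X]

theorem eq_univ_iff_forall_specializes {W : Set X} {z : X}
    (hW : IsOpen W ∧ z ∈ W ∧ ∀ U : Set X, IsOpen U → z ∈ U → W ⊆ U) :
    W = univ ↔ ∀ x, x ⤳ z :=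
  ⟨fun h x => specializes_iff_forall_open.2 fun U hU hzU => hW.2.2 U hU hzU (h ▸ mem_univ x),
    fun h => eq_univ_of_forall fun x => (h x).mem_open hW.1 hW.2.1⟩

theorem iInter_closure_singleton_eq_empty_iff :
    ⋂ x : X, closure {x} = ∅ ↔ ∀ z : X, ¬ ∀ x, x ⤳ z := by
  simp [eq_empty_iff_forall_notMem, specializes_iff_mem_closure]

theorem exists_closure_singleton_inter_eq_empty [CompactSpace X] [Nonempty X]
    (h : ⋂ x : X, closure {x} = ∅) : ∃ a b : X, closure {a} ∩ closure {b} = ∅ := by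
  obtain ⟨M, -, ⟨a, haM⟩, hM, hMmin⟩ :=
    isClosed_univ.exists_minimal_nonempty_closed_subset (univ_nonempty (α := X))
  obtain ⟨b, hab⟩ : ∃ b, a ∉ closure {b} := by simpa using eq_empty_iff_forall_notMem.1 h a
  refine ⟨a, b, eq_empty_of_forall_notMem fun z ⟨hza, hzb⟩ => hab ?_⟩
  have hzM : z ∈ M := closure_minimal (singleton_subset_iff.2 haM) hM hza
  have hM_sub : M ∩ closure {b} = M :=
    hMmin _ inter_subset_left ⟨z, hzM, hzb⟩ (hM.inter isClosed_closure)
  exact (hM_sub ▸ haM).2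

end Specialization

section Shift

variable {X : Type*}

theorem shift_iterate_apply (x : ℕ → X) (n i : ℕ) : shift^[n] x i = x (i + n) := by
  induction n generalizing x with
  | zero => rfl
  | succ n ih => rw [Function.iterate_succ_apply, ih]; rfl

/-- Position `2 ^ k` carries the bit `s (unpair k).1` (`a` for `true`, `b` for `false`), all
other positions carry `a`: every bit is repeated infinitely often, and the gaps between
coding positions grow without bound. -/
def codedSeq (a b : X) (s : ℕ → Bool) (p : ℕ) : X :=
  if 2 ^ Nat.log 2 p = p then (if s (Nat.log 2 p).unpair.1 then a else b) else a

variable {a b : X} {s : ℕ → Bool}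

theorem codedSeq_two_pow_pair (m j : ℕ) :
    codedSeq a b s (2 ^ Nat.pair m j) = if s m then a else b := by
  simp [codedSeq, Nat.log_pow]

theorem codedSeq_of_lt {k p : ℕ} (h₁ : 2 ^ k < p) (h₂ : p < 2 ^ (k + 1)) :
    codedSeq a b s p = a := by
  simp [codedSeq, Nat.log_eq_of_pow_le_of_lt_pow h₁.le h₂, h₁.ne]

theorem tendsto_shift_iterate_codedSeq [TopologicalSpace X] :
    Tendsto (fun k => shift^[2 ^ (k + 1) + 1] (codedSeq a b s)) atTop (𝓝 fun _ => a) := by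
  refine tendsto_pi_nhds.2 fun i => tendsto_const_nhds.congr' ?_
  filter_upwards [eventually_ge_atTop i] with k hik
  have hk := Nat.lt_two_pow_self (n := k + 1)
  rw [shift_iterate_apply]
  exact (codedSeq_of_lt (k := k + 1) (by omega) (by rw [pow_succ]; omega)).symm

theorem scrambledPair_shift_codedSeq [TopologicalSpace X] (hab : closure {a} ∩ closure {b} = ∅)
    {t : ℕ → Bool} (hst : s ≠ t) : ScrambledPair shift (codedSeq a b s) (codedSeq a b t) := by
  obtain ⟨m, hm⟩ := Function.ne_iff.1 hst
  have hdisj : Disjoint (closure {if s m then a else b}) (closure {if t m then a else b}) := by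
    rw [disjoint_iff_inter_eq_empty]
    cases hs : s m <;> cases ht : t m <;> simp_all [inter_comm]
  refine scrambledPair_of_tendsto_of_infinite
    (tendsto_shift_iterate_codedSeq.prodMk_nhds tendsto_shift_iterate_codedSeq)
    (isClosed_closure.preimage (continuous_apply 0)) (isClosed_closure.preimage (continuous_apply 0))
    (hdisj.preimage _) ?_
  have hinj : Function.Injective fun j => 2 ^ Nat.pair m j :=
    (Nat.pow_right_injective le_rfl).comp fun j j' h => (Nat.pair_eq_pair.1 h).2
  refine (infinite_range_of_injective hinj).mono ?_
  rintro _ ⟨j, rfl⟩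
  simp only [mem_ofPred_eq, mem_preimage, shift_iterate_apply, zero_add, codedSeq_two_pow_pair]
  exact ⟨subset_closure rfl, subset_closure rfl⟩

theorem uncountable_nat_to_bool : Uncountable (ℕ → Bool) := by
  rw [← Cardinal.aleph0_lt_mk_iff, Cardinal.mk_pi]
  simpa using Cardinal.aleph0_lt_continuum

theorem liYorkeChaotic_shift [TopologicalSpace X] (hab : closure {a} ∩ closure {b} = ∅) :
    LiYorkeChaotic (shift : (ℕ → X) → (ℕ → X)) :=
  have := uncountable_nat_to_bool
  liYorkeChaotic_of_pairwise (codedSeq a b) fun _ _ => scrambledPair_shift_codedSeq hab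

end Shift

theorem stmt_11_general {X : Type*} [TopologicalSpace X] [CompactSpace X] [Nontrivial X]
    (V : X → Set X)
    (hV : ∀ x : X, IsOpen (V x) ∧ x ∈ V x ∧ ∀ U : Set X, IsOpen U → x ∈ U → V x ⊆ U) :
    List.TFAE
      [LiYorkeChaotic (shift : (ℕ → X) → (ℕ → X)),
       ∃ z w : ℕ → X, z ≠ w ∧ ScrambledPair (shift : (ℕ → X) → (ℕ → X)) z w,
       ∃ z w : ℕ → X, z ≠ w ∧ ¬ AsymptoticPair (shift : (ℕ → X) → (ℕ → X)) z w,
       ∃ a b : X, closure {a} ∩ closure {b} = ∅,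
       (⋂ x : X, closure {x}) = ∅,
       ∀ z : X, V z ≠ Set.univ] := by
  have hV_univ z : V z = univ ↔ ∀ x, x ⤳ z := eq_univ_iff_forall_specializes (hV z)
  tfae_have 1 → 2 := LiYorkeChaotic.exists_scrambledPair
  tfae_have 2 → 3 := fun ⟨z, w, hzw, h⟩ => ⟨z, w, hzw, h.not_asymptoticPair⟩
  tfae_have 3 → 6 := by
    rintro ⟨z, w, -, hna⟩ u hu
    exact hna (asymptoticPair_of_forall_specializes (c := fun _ => u)
      fun w => specializes_pi.2 fun i => (hV_univ u).1 hu (w i))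
  tfae_have 6 ↔ 5 := by simp only [iInter_closure_singleton_eq_empty_iff, ← hV_univ, ne_eq]
  tfae_have 5 → 4 := exists_closure_singleton_inter_eq_empty
  tfae_have 4 → 1 := fun ⟨_, _, hab⟩ => liYorkeChaotic_shift hab
  tfae_finish

/-- For a compact Alexandroff space `X` with at least two elements and the
one-sided shift `σ` on `X^ℕ`, the following are equivalent: (a) `σ` is Li–Yorke chaotic;
(b) `σ` has a scrambled pair of distinct points; (c) `σ` has a non-asymptotic pair of
distinct points; (d) there are `a, b ∈ X` with `closure {a} ∩ closure {b} = ∅`;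
(e) `⋂ {closure {x} : x ∈ X} = ∅`; (f) `V z ≠ X` for every `z`. -/
theorem stmt_11 {X : Type*} [TopologicalSpace X] [CompactSpace X] [Nontrivial X]
    (hAlex : ∀ S : Set (Set X), (∀ s ∈ S, IsOpen s) → IsOpen (⋂₀ S))
    (V : X → Set X)
    (hV : ∀ x : X, IsOpen (V x) ∧ x ∈ V x ∧ ∀ U : Set X, IsOpen U → x ∈ U → V x ⊆ U) :
    List.TFAE
      [LiYorkeChaotic (shift : (ℕ → X) → (ℕ → X)),
       ∃ z w : ℕ → X, z ≠ w ∧ ScrambledPair (shift : (ℕ → X) → (ℕ → X)) z w,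
       ∃ z w : ℕ → X, z ≠ w ∧ ¬ AsymptoticPair (shift : (ℕ → X) → (ℕ → X)) z w,
       ∃ a b : X, closure {a} ∩ closure {b} = ∅,
       (⋂ x : X, closure {x}) = ∅,
       ∀ z : X, V z ≠ Set.univ] :=
  stmt_11_general V hV
end

section
/- Let X be an Alexandroff space and suppose there exists z ∈ X whose smallest open neighbourhood V(z) equals X. Endow X^ℕ with the product topology and let σ : X^ℕ → X^ℕ be the one-sided shift (x_n)_{n∈ℕ} ↦ (x_{n+1})_{n∈ℕ}. Then the only open subset of X^ℕ × X^ℕ containing the diagonal Δ_{X^ℕ} is X^ℕ × X^ℕ itself, and consequently every pair of points z, y ∈ X^ℕ is an asymptotic pair for σ. -/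
open Filter Topology Set

/-- If an Alexandroff space `X` has a point `z` whose smallest open
neighbourhood is `X` itself, then the only open subset of `X^ℕ × X^ℕ` containing the
diagonal is everything, and every pair of points of `X^ℕ` is asymptotic for the shift. -/
theorem stmt_12 {X : Type*} [TopologicalSpace X]
    (hAlex : ∀ S : Set (Set X), (∀ s ∈ S, IsOpen s) → IsOpen (⋂₀ S))
    (z : X) (hz : ∀ U : Set X, IsOpen U → z ∈ U → U = Set.univ) :
    (∀ U : Set ((ℕ → X) × (ℕ → X)), IsOpen U → (∀ p : ℕ → X, (p, p) ∈ U) →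
        U = Set.univ) ∧
    ∀ x y : ℕ → X, AsymptoticPair (shift : (ℕ → X) → (ℕ → X)) x y := by
  have hc : ∀ V : Set (ℕ → X), IsOpen V → (fun _ => z) ∈ V → V = Set.univ := by
    intro V hV hcV
    rcases isOpen_pi_iff.1 hV _ hcV with ⟨I, u, hu, hsub⟩
    apply Set.eq_univ_of_univ_subset
    refine Set.Subset.trans ?_ hsub
    intro f _ i hi
    have := hz (u i) (hu i hi).1 (hu i hi).2
    simp [this]
  have hmain : ∀ U : Set ((ℕ → X) × (ℕ → X)), IsOpen U → (∀ p : ℕ → X, (p, p) ∈ U) →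
      U = Set.univ := by
    intro U hU hdiag
    have hmem : U ∈ nhds ((fun _ => z : ℕ → X), (fun _ => z : ℕ → X)) :=
      hU.mem_nhds (hdiag _)
    rw [nhds_prod_eq, Filter.mem_prod_iff] at hmem
    rcases hmem with ⟨A, hA, B, hB, hAB⟩
    rcases mem_nhds_iff.1 hA with ⟨A', hA'A, hA'o, hA'c⟩
    rcases mem_nhds_iff.1 hB with ⟨B', hB'B, hB'o, hB'c⟩
    have : A' ×ˢ B' ⊆ U := fun p hp => hAB ⟨hA'A hp.1, hB'B hp.2⟩
    rw [hc A' hA'o hA'c, hc B' hB'o hB'c] at this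
    exact Set.eq_univ_of_univ_subset (by simpa using this)
  refine ⟨hmain, fun x y U hU hdiag => ?_⟩
  have : {n : ℕ | (shift^[n] x, shift^[n] y) ∉ U} = ∅ := by
    rw [hmain U hU hdiag]; simp
  simp [this]
end
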